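/- arXiv:2401.16774 — 7 statements merged into one kernel-verified Lean document; each statement's English description precedes it below -/
import Mathlib

section
/- Let G be an infinite group, finitely generated by a finite symmetric set S. Then there exists a bi-infinite geodesic: a function p : ℤ → G such that d(p(i), p(j)) = |j - i| for all integers i < j, where d is the left-invariant word metric on G with respect to S. -/
open Pointwise

variable {G : Type*} [Group G]

/-- The word metric on `G` with respect to the generating set `S`:
`wordDist S a b` is the length of a shortest word in `S` expressing `a⁻¹ * b`. -/
noncomputable def wordDist (S : Set G) (a b : G) : ℕ :=
  sInf {n | ∃ l : List G, (∀ s ∈ l, s ∈ S) ∧ l.length = n ∧ l.prod = a⁻¹ * b}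

namespace WDAux

/-- norm -/
noncomputable def nrm (S : Set G) (g : G) : ℕ :=
  sInf {n | ∃ l : List G, (∀ s ∈ l, s ∈ S) ∧ l.length = n ∧ l.prod = g}

lemma wordDist_eq_nrm (S : Set G) (a b : G) : wordDist S a b = nrm S (a⁻¹ * b) := rfl

lemma nrm_le (S : Set G) {g : G} {l : List G} (hl : ∀ s ∈ l, s ∈ S) (hp : l.prod = g) :
    nrm S g ≤ l.length := Nat.sInf_le ⟨l, hl, rfl, hp⟩

variable (S : Finset G)

lemma exists_word (hsym : ∀ s ∈ S, s⁻¹ ∈ S) (hgen : Subgroup.closure (S : Set G) = ⊤) (g : G) : ∃ l : List G, (∀ s ∈ l, s ∈ (S : Set G)) ∧ l.prod = g := by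
  have h1 : g ∈ Submonoid.closure ((S : Set G) ∪ (S : Set G)⁻¹) := by
    rw [← Subgroup.closure_toSubmonoid, hgen]; trivial
  obtain ⟨l, hl, hp⟩ := Submonoid.exists_list_of_mem_closure h1
  refine ⟨l, fun s hs => ?_, hp⟩
  rcases hl s hs with h | h
  · exact h
  · simpa using hsym _ h

lemma exists_min_word (hsym : ∀ s ∈ S, s⁻¹ ∈ S) (hgen : Subgroup.closure (S : Set G) = ⊤) (g : G) : ∃ l : List G, (∀ s ∈ l, s ∈ (S : Set G)) ∧
    l.length = nrm (S : Set G) g ∧ l.prod = g := by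
  obtain ⟨l, hl, hp⟩ := exists_word S hsym hgen g
  exact Nat.sInf_mem (⟨l.length, l, hl, rfl, hp⟩ :
    Set.Nonempty {n | ∃ l : List G, (∀ s ∈ l, s ∈ (S : Set G)) ∧ l.length = n ∧ l.prod = g})

lemma nrm_mul_le (hsym : ∀ s ∈ S, s⁻¹ ∈ S) (hgen : Subgroup.closure (S : Set G) = ⊤) (a b : G) :
    nrm (S : Set G) (a * b) ≤ nrm (S : Set G) a + nrm (S : Set G) b := by
  obtain ⟨la, hla, hlena, hpa⟩ := exists_min_word S hsym hgen a
  obtain ⟨lb, hlb, hlenb, hpb⟩ := exists_min_word S hsym hgen b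
  have := nrm_le (S : Set G) (l := la ++ lb) (g := a * b)
    (by intro s hs; rcases List.mem_append.mp hs with h | h; exacts [hla s h, hlb s h])
    (by rw [List.prod_append, hpa, hpb])
  simpa [hlena, hlenb] using this

lemma nrm_inv (hsym : ∀ s ∈ S, s⁻¹ ∈ S) (hgen : Subgroup.closure (S : Set G) = ⊤) (g : G) : nrm (S : Set G) g⁻¹ ≤ nrm (S : Set G) g := by
  obtain ⟨l, hl, hlen, hp⟩ := exists_min_word S hsym hgen g
  have := nrm_le (S : Set G) (l := (l.map fun x => x⁻¹).reverse) (g := g⁻¹)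
    (by intro s hs
        simp only [List.mem_reverse, List.mem_map] at hs
        obtain ⟨a, ha, rfl⟩ := hs
        exact hsym a (hl a ha))
    (by rw [← List.prod_inv_reverse, hp])
  simpa [hlen] using this

/-- geodesic prefix property -/
lemma prefix_dist (hsym : ∀ s ∈ S, s⁻¹ ∈ S) (hgen : Subgroup.closure (S : Set G) = ⊤) {g : G} {l : List G} (hl : ∀ s ∈ l, s ∈ (S : Set G))
    (hlen : l.length = nrm (S : Set G) g) (hp : l.prod = g) {i j : ℕ}
    (hij : i ≤ j) (hj : j ≤ l.length) :
    nrm (S : Set G) ((l.take i).prod⁻¹ * (l.take j).prod) = j - i := by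
  -- upper bound: the middle segment
  set m := (l.drop i).take (j - i) with hm
  have hsplit : l.take j = l.take i ++ m := by
    rw [hm, ← List.take_add]
    congr 1
    omega
  have hmid : m.prod = (l.take i).prod⁻¹ * (l.take j).prod := by
    rw [hsplit, List.prod_append]; group
  have hmlen : m.length = j - i := by
    rw [hm, List.length_take, List.length_drop]
    omega
  have hub : nrm (S : Set G) ((l.take i).prod⁻¹ * (l.take j).prod) ≤ j - i := by
    have := nrm_le (S : Set G)
      (l := m) (fun s hs => hl s (List.mem_of_mem_take (hsplit ▸ List.mem_append_right _ hs :
        s ∈ l.take j))) hmid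
    omega
  -- lower bound
  have h1 : nrm (S : Set G) (l.take i).prod ≤ i := by
    have := nrm_le (S : Set G) (l := l.take i) (fun s hs => hl s (List.mem_of_mem_take hs)) rfl
    have : (l.take i).length ≤ i := by simp [List.length_take]
    calc nrm (S : Set G) (l.take i).prod ≤ (l.take i).length :=
      nrm_le (S : Set G) (fun s hs => hl s (List.mem_of_mem_take hs)) rfl
    _ ≤ i := this
  have h2 : nrm (S : Set G) ((l.take j).prod⁻¹ * g) ≤ l.length - j := by
    have hd : (l.drop j).prod = (l.take j).prod⁻¹ * g := by
      have : l.take j ++ l.drop j = l := List.take_append_drop j l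
      calc (l.drop j).prod = (l.take j).prod⁻¹ * (l.take j ++ l.drop j).prod := by
            rw [List.prod_append]; group
      _ = (l.take j).prod⁻¹ * g := by rw [this, hp]
    calc nrm (S : Set G) ((l.take j).prod⁻¹ * g) ≤ (l.drop j).length :=
          nrm_le (S : Set G) (fun s hs => hl s (List.mem_of_mem_drop hs)) hd
    _ = l.length - j := by simp [List.length_drop]
  have h3 : nrm (S : Set G) g ≤ nrm (S : Set G) (l.take i).prod
      + nrm (S : Set G) ((l.take i).prod⁻¹ * (l.take j).prod)
      + nrm (S : Set G) ((l.take j).prod⁻¹ * g) := by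
    have e : g = (l.take i).prod * (((l.take i).prod⁻¹ * (l.take j).prod) *
        ((l.take j).prod⁻¹ * g)) := by group
    calc nrm (S : Set G) g = nrm (S : Set G) ((l.take i).prod *
          (((l.take i).prod⁻¹ * (l.take j).prod) * ((l.take j).prod⁻¹ * g))) := by rw [← e]
    _ ≤ nrm (S : Set G) (l.take i).prod + nrm (S : Set G) (((l.take i).prod⁻¹ * (l.take j).prod)
          * ((l.take j).prod⁻¹ * g)) := nrm_mul_le S hsym hgen _ _
    _ ≤ nrm (S : Set G) (l.take i).prod + (nrm (S : Set G) ((l.take i).prod⁻¹ * (l.take j).prod)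
          + nrm (S : Set G) ((l.take j).prod⁻¹ * g)) := by
            have := nrm_mul_le S hsym hgen ((l.take i).prod⁻¹ * (l.take j).prod)
              ((l.take j).prod⁻¹ * g)
            exact Nat.add_le_add_left this _
    _ = _ := by omega
  omega

end WDAux

namespace WDAux

variable (S : Finset G)

lemma prefix_dist' (hsym : ∀ s ∈ S, s⁻¹ ∈ S) (hgen : Subgroup.closure (S : Set G) = ⊤)
    {g : G} {l : List G} (hl : ∀ s ∈ l, s ∈ (S : Set G))
    (hlen : l.length = nrm (S : Set G) g) (hp : l.prod = g) {i j : ℕ}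
    (hij : i ≤ j) (hj : j ≤ l.length) :
    nrm (S : Set G) ((l.take j).prod⁻¹ * (l.take i).prod) = j - i := by
  have h1 := prefix_dist S hsym hgen hl hlen hp hij hj
  have h2 := nrm_inv S hsym hgen ((l.take i).prod⁻¹ * (l.take j).prod)
  have h3 := nrm_inv S hsym hgen ((l.take j).prod⁻¹ * (l.take i).prod)
  rw [mul_inv_rev, inv_inv] at h2 h3
  omega

lemma nrm_eq_zero (hsym : ∀ s ∈ S, s⁻¹ ∈ S) (hgen : Subgroup.closure (S : Set G) = ⊤)
    {g : G} (h : nrm (S : Set G) g = 0) : g = 1 := by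
  obtain ⟨l, hl, hlen, hp⟩ := exists_min_word S hsym hgen g
  rw [h] at hlen
  rw [← hp, List.length_eq_zero_iff.mp hlen, List.prod_nil]

lemma ball_finite (hsym : ∀ s ∈ S, s⁻¹ ∈ S) (hgen : Subgroup.closure (S : Set G) = ⊤)
    (n : ℕ) : {g : G | nrm (S : Set G) g ≤ n}.Finite := by
  induction n with
  | zero =>
    apply Set.Finite.subset (Set.finite_singleton (1 : G))
    intro g hg
    exact nrm_eq_zero S hsym hgen (Nat.le_zero.mp hg)
  | succ n ih =>
    apply Set.Finite.subset ((ih.mul S.finite_toSet).union (Set.finite_singleton 1))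
    intro g hg
    obtain ⟨l, hl, hlen, hp⟩ := exists_min_word S hsym hgen g
    rcases List.eq_nil_or_concat l with rfl | ⟨l', s, rfl⟩
    · right; simp [← hp]
    · left
      have hg' : g = l'.prod * s := by rw [← hp]; simp
      rw [hg']
      refine Set.mul_mem_mul ?_ (hl s (by simp))
      have h1 : nrm (S : Set G) l'.prod ≤ l'.length :=
        nrm_le _ (fun t ht => hl t (by simp [ht])) rfl
      have h2 : l'.length + 1 = nrm (S : Set G) g := by
        rw [← hlen]; simp
      have : nrm (S : Set G) g ≤ n + 1 := hg
      exact Set.mem_setOf.mpr (by omega)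

lemma exists_nrm_eq (hsym : ∀ s ∈ S, s⁻¹ ∈ S) (hgen : Subgroup.closure (S : Set G) = ⊤)
    [Infinite G] (n : ℕ) : ∃ g : G, nrm (S : Set G) g = n := by
  have hbig : ∃ g : G, n ≤ nrm (S : Set G) g := by
    by_contra h
    push_neg at h
    exact Set.infinite_univ ((ball_finite S hsym hgen n).subset (fun g _ => (h g).le))
  obtain ⟨g, hg⟩ := hbig
  obtain ⟨l, hl, hlen, hp⟩ := exists_min_word S hsym hgen g
  have := prefix_dist S hsym hgen hl hlen hp (Nat.zero_le n) (by omega)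
  exact ⟨(l.take n).prod, by simpa using this⟩

end WDAux

/-- In an infinite group finitely generated by a finite symmetric set, there is a
bi-infinite geodesic for the word metric. -/
theorem exists_biinfinite_geodesic [Infinite G] (S : Finset G)
    (hsym : ∀ s ∈ S, s⁻¹ ∈ S) (hgen : Subgroup.closure (S : Set G) = ⊤) :
    ∃ p : ℤ → G, ∀ i j : ℤ, i < j →
      wordDist (S : Set G) (p i) (p j) = (j - i).toNat := by
  classical
  open WDAux in
  -- minimal words of length 2n
  have hex : ∀ n : ℕ, ∃ l : List G, (∀ s ∈ l, s ∈ (S : Set G)) ∧ l.length = 2 * n ∧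
      l.length = nrm (S : Set G) l.prod := by
    intro n
    obtain ⟨g, hg⟩ := exists_nrm_eq S hsym hgen (2 * n)
    obtain ⟨l, hl, hlen, hp⟩ := exists_min_word S hsym hgen g
    exact ⟨l, hl, by rw [hlen, hg], by rw [hp, ← hlen]⟩
  choose L hLmem hLlen hLnrm using hex
  -- the recentered finite geodesics
  set q : ℕ → ℤ → G := fun n i =>
    if i.natAbs ≤ n then ((L n).take n).prod⁻¹ * ((L n).take ((n : ℤ) + i).toNat).prod
    else 1 with hq
  have key : ∀ (n : ℕ) (i j : ℤ), i.natAbs ≤ n → j.natAbs ≤ n → i ≤ j →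
      nrm (S : Set G) ((q n i)⁻¹ * (q n j)) = (j - i).toNat := by
    intro n i j hi hj hij
    have e : (q n i)⁻¹ * (q n j) =
        ((L n).take ((n : ℤ) + i).toNat).prod⁻¹ * ((L n).take ((n : ℤ) + j).toNat).prod := by
      rw [hq]; simp only [if_pos hi, if_pos hj]; group
    rw [e, WDAux.prefix_dist S hsym hgen (hLmem n) (hLnrm n) rfl (by omega)
      (by rw [hLlen n]; omega)]
    omega
  have hball : ∀ (n : ℕ) (i : ℤ), nrm (S : Set G) (q n i) ≤ i.natAbs := by
    intro n i
    rw [hq]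
    by_cases hi : i.natAbs ≤ n
    · simp only [if_pos hi]
      rcases le_or_gt 0 i with h0 | h0
      · have hn : ((L n).take n).prod = ((L n).take ((n : ℤ)).toNat).prod := by norm_num
        rw [hn, WDAux.prefix_dist S hsym hgen (hLmem n) (hLnrm n) rfl (by omega)
          (by rw [hLlen n]; omega)]
        omega
      · have hn : ((L n).take n).prod = ((L n).take ((n : ℤ)).toNat).prod := by norm_num
        rw [hn, WDAux.prefix_dist' S hsym hgen (hLmem n) (hLnrm n) rfl
          (i := ((n : ℤ) + i).toNat) (j := ((n : ℤ)).toNat) (by omega)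
          (by rw [hLlen n]; omega)]
        omega
    · simp only [if_neg hi]
      have : nrm (S : Set G) (1 : G) ≤ ([] : List G).length :=
        WDAux.nrm_le _ (by simp) (by simp)
      simp at this; omega
  -- ultrafilter extraction
  let U : Ultrafilter ℕ := Ultrafilter.of Filter.atTop
  have hU : ∀ N : ℕ, {n | N ≤ n} ∈ U := fun N =>
    Ultrafilter.of_le Filter.atTop (Filter.mem_atTop N)
  have hsel : ∀ i : ℤ, ∃ g : G, {n | q n i = g} ∈ U := by
    intro i
    have hfin := WDAux.ball_finite S hsym hgen i.natAbs
    have hcover : (Set.univ : Set ℕ) ⊆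
        ⋃ g ∈ {g : G | nrm (S : Set G) g ≤ i.natAbs}, {n | q n i = g} := by
      intro n _
      exact Set.mem_biUnion (hball n i) rfl
    have hmem : (⋃ g ∈ {g : G | nrm (S : Set G) g ≤ i.natAbs}, {n | q n i = g}) ∈ U :=
      Filter.mem_of_superset Filter.univ_mem hcover
    rcases (Ultrafilter.finite_biUnion_mem_iff hfin).mp hmem with ⟨g, _, hg⟩
    exact ⟨g, hg⟩
  choose p hp using hsel
  refine ⟨p, fun i j hij => ?_⟩
  have hmem : ({n | q n i = p i} ∩ {n | q n j = p j} ∩ {n | i.natAbs + j.natAbs ≤ n}) ∈ U :=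
    Filter.inter_mem (Filter.inter_mem (hp i) (hp j)) (hU _)
  obtain ⟨n, hn⟩ := Ultrafilter.nonempty_of_mem hmem
  have h1 : q n i = p i := hn.1.1
  have h2 : q n j = p j := hn.1.2
  have h3 : i.natAbs + j.natAbs ≤ n := hn.2
  rw [WDAux.wordDist_eq_nrm, ← h1, ← h2]
  exact key n i j (by omega) (by omega) hij.le
end

section
/- Every subshift of finite type which has a safe symbol is contractible. -/
open Pointwise

variable {G : Type*} [Group G]

/-- The shift action of `G` on configurations `G → A`: `(g • x) h = x (g⁻¹ h)`. -/
def gshift {A : Type*} (g : G) (x : G → A) : G → A := fun h => x (g⁻¹ * h)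

/-- A subshift: a closed, shift-invariant subset of `A^G` (product topology). -/
def IsSubshift {A : Type*} [TopologicalSpace A] (X : Set (G → A)) : Prop :=
  IsClosed X ∧ ∀ (g : G), ∀ x ∈ X, gshift g x ∈ X

/-- A morphism (block map) from `X` to `Y`: a continuous shift-commuting map. -/
def IsMorphismOn {A B : Type*} [TopologicalSpace A] [TopologicalSpace B]
    (X : Set (G → A)) (Y : Set (G → B)) (f : (G → A) → (G → B)) : Prop :=
  ContinuousOn f X ∧ Set.MapsTo f X Y ∧
    ∀ (g : G), ∀ x ∈ X, f (gshift g x) = gshift g (f x)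

/-- A contraction homotopy on `X`: a homotopy between the two projections
`X × X → X` (in curried form). -/
def IsContraction {A : Type*} [TopologicalSpace A] (X : Set (G → A))
    (h : (G → Bool) → (G → A) → (G → A) → (G → A)) : Prop :=
  ContinuousOn (fun p : (G → Bool) × (G → A) × (G → A) => h p.1 p.2.1 p.2.2)
    (Set.univ ×ˢ X ×ˢ X) ∧
  (∀ t, ∀ x ∈ X, ∀ y ∈ X, h t x y ∈ X) ∧
  (∀ (g : G), ∀ t, ∀ x ∈ X, ∀ y ∈ X,
    h (gshift g t) (gshift g x) (gshift g y) = gshift g (h t x y)) ∧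
  (∀ x ∈ X, ∀ y ∈ X, h (fun _ => false) x y = x) ∧
  (∀ x ∈ X, ∀ y ∈ X, h (fun _ => true) x y = y)

/-- A subshift is contractible if the two projections `X × X → X` are homotopic. -/
def IsContractible {A : Type*} [TopologicalSpace A] (X : Set (G → A)) : Prop :=
  ∃ h, IsContraction X h

/-- The pattern `p` with finite domain `D` appears in the configuration `x`. -/
def Appears {A : Type*} (x : G → A) (D : Finset G) (p : G → A) : Prop :=
  ∃ g : G, ∀ d ∈ D, x (g * d) = p d

/-- A subshift of finite type: defined by finitely many forbidden finite patterns. -/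
def IsSFT {A : Type*} (X : Set (G → A)) : Prop :=
  ∃ (n : ℕ) (D : Fin n → Finset G) (p : Fin n → (G → A)),
    X = {x | ∀ i, ¬ Appears x (D i) (p i)}

/-- Filling an arbitrary set of coordinates with a safe symbol stays in a closed set. -/
theorem zfill_mem [DecidableEq G] {A : Type*} [TopologicalSpace A] [DiscreteTopology A]
    (X : Set (G → A)) (hcl : IsClosed X) (z : A)
    (hsafe : ∀ x ∈ X, ∀ a : G, Function.update x a z ∈ X)
    {x : G → A} (hx : x ∈ X) (S : Set G) [DecidablePred (· ∈ S)] :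
    (fun g => if g ∈ S then x g else z) ∈ X := by
  have key : ∀ F : Finset G, (fun g => if g ∈ F then z else x g) ∈ X := by
    intro F
    refine Finset.induction_on F (by simpa using hx) ?_
    intro a F ha ih
    have heq : (fun g => if g ∈ insert a F then z else x g)
        = Function.update (fun g => if g ∈ F then z else x g) a z := by
      funext g
      by_cases hg : g = a
      · subst hg; simp
      · rw [Function.update_of_ne hg]
        simp [Finset.mem_insert, hg]
    rw [heq]
    exact hsafe _ ih a
  have hcls : (fun g => if g ∈ S then x g else z) ∈ closure X := by
    rw [mem_closure_iff]
    intro o ho hmem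
    rcases isOpen_pi_iff.mp ho _ hmem with ⟨I, u, hu, hsub⟩
    refine ⟨fun g => if g ∈ I.filter (fun g => g ∉ S) then z else x g, hsub ?_, key _⟩
    intro i hi
    by_cases hiS : i ∈ S
    · have h1 : i ∉ I.filter (fun g => g ∉ S) := by simp [hiS]
      have h2 := (hu i hi).2
      simp only [hiS, if_true] at h2
      simpa [h1] using h2
    · have h1 : i ∈ I.filter (fun g => g ∉ S) := by simp [hiS, Finset.mem_coe.mp hi]
      have h2 := (hu i hi).2
      simp only [hiS, if_false] at h2
      simpa [h1] using h2
  exact hcl.closure_subset hcls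

open Classical in
/-- The contraction map built from a window `W` and a safe symbol `z`. -/
noncomputable def ctr {A : Type*} (z : A) (W : Finset G) (t : G → Bool)
    (x y : G → A) : G → A :=
  fun g => if ∀ w ∈ W, t (g * w) = false then x g
    else if ∀ w ∈ W, t (g * w) = true then y g else z

theorem ctr_continuous {A : Type*} [TopologicalSpace A] [DiscreteTopology A]
    (z : A) (W : Finset G) :
    Continuous (fun p : (G → Bool) × (G → A) × (G → A) => ctr z W p.1 p.2.1 p.2.2) := by
  apply continuous_pi
  intro g
  unfold ctr
  have hclopen : ∀ b : Bool,
      IsClopen {p : (G → Bool) × (G → A) × (G → A) | ∀ w ∈ W, p.1 (g * w) = b} := by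
    intro b
    have he : {p : (G → Bool) × (G → A) × (G → A) | ∀ w ∈ W, p.1 (g * w) = b}
        = ⋂ w ∈ (W : Set G), ((fun p : (G → Bool) × (G → A) × (G → A) => p.1 (g * w)) ⁻¹' {b}) := by
      ext q; simp
    rw [he]
    apply Set.Finite.isClopen_biInter W.finite_toSet
    intro w _
    exact (isClopen_discrete {b}).preimage ((continuous_apply (g * w)).comp continuous_fst)
  apply Continuous.if
  · intro a ha
    rw [(hclopen false).frontier_eq] at ha
    exact absurd ha (Set.notMem_empty a)
  · exact (continuous_apply g).comp (continuous_fst.comp continuous_snd)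
  · apply Continuous.if
    · intro a ha
      rw [(hclopen true).frontier_eq] at ha
      exact absurd ha (Set.notMem_empty a)
    · exact (continuous_apply g).comp (continuous_snd.comp continuous_snd)
    · exact continuous_const

/-- Every subshift of finite type with a safe symbol is contractible. -/
theorem sft_safe_symbol_contractible [DecidableEq G] {A : Type*}
    [TopologicalSpace A] [DiscreteTopology A] [Finite A]
    (X : Set (G → A)) (hX : IsSubshift X) (hSFT : IsSFT X) (z : A)
    (hsafe : ∀ x ∈ X, ∀ a : G, Function.update x a z ∈ X) :
    IsContractible X := by
  classical
  obtain ⟨n, D, p, hXeq⟩ := hSFT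
  set W : Finset G := insert (1 : G) (Finset.univ.biUnion fun i : Fin n => (D i)⁻¹ * D i)
    with hWdef
  have h1W : (1 : G) ∈ W := Finset.mem_insert_self _ _
  refine ⟨fun t x y => ctr z W t x y, ?_, ?_, ?_, ?_, ?_⟩
  · exact (ctr_continuous z W).continuousOn
  · -- membership
    intro t x hx y hy
    rw [hXeq]
    intro i hi
    obtain ⟨g, hg⟩ := hi
    by_cases hT : ∃ d ∈ D i, ∀ w ∈ W, t (g * d * w) = true
    · obtain ⟨d0, hd0, hd0T⟩ := hT
      have hyT := zfill_mem X hX.1 z hsafe hy {a | ∀ w ∈ W, t (a * w) = true}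
      rw [hXeq] at hyT
      apply hyT i
      refine ⟨g, fun d hd => ?_⟩
      rw [← hg d hd]
      have hNF : ¬ ∀ w ∈ W, t (g * d * w) = false := by
        intro hall
        have h1 : t (g * d) = false := by simpa using hall 1 h1W
        have hw : d0⁻¹ * d ∈ W := by
          refine Finset.mem_insert_of_mem ?_
          refine Finset.mem_biUnion.mpr ⟨i, Finset.mem_univ _, ?_⟩
          exact Finset.mul_mem_mul (Finset.inv_mem_inv hd0) hd
        have h2 := hd0T (d0⁻¹ * d) hw
        rw [mul_assoc, mul_inv_cancel_left] at h2
        rw [h1] at h2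
        exact Bool.noConfusion h2
      show (if g * d ∈ {a | ∀ w ∈ W, t (a * w) = true} then y (g * d) else z)
          = ctr z W t x y (g * d)
      unfold ctr
      rw [if_neg hNF]
      by_cases hgd : ∀ w ∈ W, t (g * d * w) = true
      · have hm : g * d ∈ {a | ∀ w ∈ W, t (a * w) = true} := hgd
        rw [if_pos hm, if_pos hgd]
      · have hm : g * d ∉ {a | ∀ w ∈ W, t (a * w) = true} := hgd
        rw [if_neg hm, if_neg hgd]
    · push_neg at hT
      have hxS := zfill_mem X hX.1 z hsafe hx {a | ∀ w ∈ W, t (a * w) = false}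
      rw [hXeq] at hxS
      apply hxS i
      refine ⟨g, fun d hd => ?_⟩
      rw [← hg d hd]
      show (if g * d ∈ {a | ∀ w ∈ W, t (a * w) = false} then x (g * d) else z)
          = ctr z W t x y (g * d)
      unfold ctr
      by_cases hgd : ∀ w ∈ W, t (g * d * w) = false
      · have hm : g * d ∈ {a | ∀ w ∈ W, t (a * w) = false} := hgd
        rw [if_pos hm, if_pos hgd]
      · have hm : g * d ∉ {a | ∀ w ∈ W, t (a * w) = false} := hgd
        rw [if_neg hm, if_neg hgd]
        obtain ⟨w0, hw0, hw0t⟩ := hT d hd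
        rw [if_neg]
        intro hall
        exact hw0t (hall w0 hw0)
  · -- equivariance
    intro g t x hx y hy
    funext a
    show ctr z W (gshift g t) (gshift g x) (gshift g y) a = ctr z W t x y (g⁻¹ * a)
    unfold ctr gshift
    simp only [mul_assoc]
  · -- t = false
    intro x hx y hy
    funext g
    show ctr z W (fun _ => false) x y g = x g
    unfold ctr
    rw [if_pos (fun w _ => rfl)]
  · -- t = true
    intro x hx y hy
    funext g
    show ctr z W (fun _ => true) x y g = y g
    unfold ctr
    rw [if_neg, if_pos (fun w _ => rfl)]
    intro hall
    exact absurd (hall 1 h1W) (by simp)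
end

section
/- The full shifts I_m = {0,...,m-1}^G and I_n = {0,...,n-1}^G are homotopy equivalent for all m, n ≥ 2; moreover the homotopy equivalence can be chosen to respect the endpoints 0̄ and (m-1)-bar, respectively 0̄ and (n-1)-bar. -/
open Pointwise

variable {G : Type*} [Group G]

/-- A homotopy between morphisms `f g : X → Y`, parametrized by the binary full shift
`{0,1}^G` (represented as `G → Bool`). -/
def IsHomotopy {A B : Type*} [TopologicalSpace A] [TopologicalSpace B]
    (X : Set (G → A)) (Y : Set (G → B)) (f g : (G → A) → (G → B))
    (h : (G → Bool) → (G → A) → (G → B)) : Prop :=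
  ContinuousOn (fun p : (G → Bool) × (G → A) => h p.1 p.2) (Set.univ ×ˢ X) ∧
  (∀ t, ∀ x ∈ X, h t x ∈ Y) ∧
  (∀ (g : G), ∀ t, ∀ x ∈ X, h (gshift g t) (gshift g x) = gshift g (h t x)) ∧
  (∀ x ∈ X, h (fun _ => false) x = f x) ∧
  (∀ x ∈ X, h (fun _ => true) x = g x)

/-- The full shift `I_m = {0,…,m-1}^G`, realized inside `ℕ^G`. -/
def Icfg (m : ℕ) : Set (G → ℕ) := {t | ∀ g : G, t g < m}


/-- Symbol map `a ↦ 0` if `a = 0`, else `k - 1`. -/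
def phiSym (k a : ℕ) : ℕ := if a = 0 then 0 else k - 1

lemma phiSym_lt (k : ℕ) (hk : 2 ≤ k) (a : ℕ) : phiSym k a < k := by
  unfold phiSym; split <;> omega

/-- A cellwise map is a morphism between full shifts. -/
lemma cellwise_morphism (k l : ℕ) (hl : 2 ≤ l) (ψ : ℕ → ℕ) (hψ : ∀ a, ψ a < l) :
    IsMorphismOn (G := G) (Icfg k) (Icfg l) (fun x g' => ψ (x g')) := by
  refine ⟨?_, fun x _ g' => hψ _, fun g x _ => rfl⟩
  exact (continuous_pi fun g' =>
    (continuous_of_discreteTopology (f := ψ)).comp (continuous_apply g')).continuousOn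

/-- The cellwise mix of a cellwise morphism with the identity is a homotopy. -/
lemma mix_homotopy (k : ℕ) (ψ : ℕ → ℕ) (hψ : ∀ a, a < k → ψ a < k) :
    IsHomotopy (G := G) (Icfg k) (Icfg k) (fun x g' => ψ (x g')) id
      (fun t x g' => if t g' then x g' else ψ (x g')) := by
  refine ⟨?_, ?_, fun g t x _ => rfl, fun x _ => by funext g'; simp,
    fun x _ => by funext g'; simp⟩
  · apply Continuous.continuousOn
    apply continuous_pi
    intro g'
    have hd : Continuous (fun q : Bool × ℕ => if q.1 then q.2 else ψ q.2) :=
      continuous_of_discreteTopology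
    have h1 : Continuous (fun p : (G → Bool) × (G → ℕ) => (p.1 g', p.2 g')) := by
      fun_prop
    exact hd.comp h1
  · intro t x hx g'
    dsimp only
    split
    · exact hx g'
    · exact hψ _ (hx g')

/-- The full shifts `I_m` and `I_n` (`m, n ≥ 2`) are homotopy equivalent mod endpoints. -/
theorem fullshifts_homotopy_equivalent_mod_endpoints (m n : ℕ) (hm : 2 ≤ m) (hn : 2 ≤ n) :
    ∃ (f g : (G → ℕ) → (G → ℕ)),
      IsMorphismOn (Icfg m) (Icfg n) f ∧ IsMorphismOn (Icfg n) (Icfg m) g ∧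
      f (fun _ => 0) = (fun _ => 0) ∧ f (fun _ => m - 1) = (fun _ => n - 1) ∧
      g (fun _ => 0) = (fun _ => 0) ∧ g (fun _ => n - 1) = (fun _ => m - 1) ∧
      (∃ h, IsHomotopy (Icfg m) (Icfg m) (fun x => g (f x)) id h ∧
        (∀ t, h t (fun _ => 0) = (fun _ => 0)) ∧
        (∀ t, h t (fun _ => m - 1) = (fun _ => m - 1))) ∧
      (∃ h, IsHomotopy (Icfg n) (Icfg n) (fun y => f (g y)) id h ∧
        (∀ t, h t (fun _ => 0) = (fun _ => 0)) ∧
        (∀ t, h t (fun _ => n - 1) = (fun _ => n - 1))) := by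
  have hm1 : m - 1 ≠ 0 := by omega
  have hn1 : n - 1 ≠ 0 := by omega
  refine ⟨fun x g' => phiSym n (x g'), fun y g' => phiSym m (y g'),
    cellwise_morphism m n hn _ (phiSym_lt n hn),
    cellwise_morphism n m hm _ (phiSym_lt m hm),
    by funext g'; simp [phiSym],
    by funext g'; simp [phiSym, hm1],
    by funext g'; simp [phiSym],
    by funext g'; simp [phiSym, hn1],
    ⟨fun t x g' => if t g' then x g' else phiSym m (phiSym n (x g')), ?_, ?_, ?_⟩,
    ⟨fun t x g' => if t g' then x g' else phiSym n (phiSym m (x g')), ?_, ?_, ?_⟩⟩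
  · exact mix_homotopy m (fun a => phiSym m (phiSym n a))
      (fun a _ => phiSym_lt m hm _)
  · intro t; funext g'; simp [phiSym]
  · intro t; funext g'; simp [phiSym, hm1, hn1]
  · exact mix_homotopy n (fun a => phiSym n (phiSym m a))
      (fun a _ => phiSym_lt n hn _)
  · intro t; funext g'; simp [phiSym]
  · intro t; funext g'; simp [phiSym, hm1, hn1]
end

section
/- Let X and Y be subshifts, Y of finite type, and suppose X is a retract of Y. Then X is of finite type. -/
open Pointwise

variable {G : Type*} [Group G]

/-- `X` is a retract of `Y`: there are morphisms `f : X → Y`, `r : Y → X`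
with `r ∘ f = id_X`. -/
def IsRetractOf {A B : Type*} [TopologicalSpace A] [TopologicalSpace B]
    (X : Set (G → A)) (Y : Set (G → B)) : Prop :=
  ∃ f r, IsMorphismOn X Y f ∧ IsMorphismOn Y X r ∧ ∀ x ∈ X, r (f x) = x

section Aux

/-- In a product of discrete spaces, every neighborhood contains a cylinder. -/
lemma exists_finset_cylinder_subset {A : Type*} [TopologicalSpace A] [DiscreteTopology A]
    {x : G → A} {U : Set (G → A)} (hU : U ∈ nhds x) :
    ∃ S : Finset G, {y : G → A | ∀ g ∈ S, y g = x g} ⊆ U := by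
  rw [nhds_pi] at hU
  rcases Filter.mem_pi.mp hU with ⟨I, hI, t, ht, hsub⟩
  refine ⟨hI.toFinset, fun y hy => hsub fun i hi => ?_⟩
  have h2 : y i = x i := hy i (hI.mem_toFinset.mpr hi)
  rw [h2]
  exact mem_of_mem_nhds (ht i)

/-- A continuous map from a compact set in a product of discrete spaces to a discrete
space has a finite memory set. -/
lemma exists_memory {A C : Type*} [TopologicalSpace A] [DiscreteTopology A]
    [TopologicalSpace C] [DiscreteTopology C]
    {X : Set (G → A)} (hXc : IsCompact X) {φ : (G → A) → C}
    (hφ : ContinuousOn φ X) :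
    ∃ S : Finset G, ∀ x ∈ X, ∀ y ∈ X, (∀ s ∈ S, x s = y s) → φ x = φ y := by
  classical
  have key : ∀ x ∈ X, ∃ S : Finset G,
      ∀ y ∈ X, (∀ g ∈ S, y g = x g) → φ y = φ x := by
    intro x hx
    have h1 : φ ⁻¹' {φ x} ∈ nhdsWithin x X :=
      (hφ x hx).preimage_mem_nhdsWithin ((isOpen_discrete _).mem_nhds rfl)
    rcases mem_nhdsWithin_iff_exists_mem_nhds_inter.mp h1 with ⟨U, hU, hUX⟩
    rcases exists_finset_cylinder_subset hU with ⟨S, hSsub⟩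
    exact ⟨S, fun y hy hagree => hUX ⟨hSsub hagree, hy⟩⟩
  choose! S hS using key
  have hcov : ∀ x ∈ X, (↑(S x) : Set G).pi (fun g => ({x g} : Set A)) ∈ nhds x := by
    intro x hx
    refine (isOpen_set_pi (Finset.finite_toSet _) (fun _ _ => isOpen_discrete _)).mem_nhds ?_
    exact fun g _ => rfl
  rcases hXc.elim_nhds_subcover _ hcov with ⟨t, htX, hcover⟩
  refine ⟨t.biUnion S, fun x hx y hy hagree => ?_⟩
  rcases Set.mem_iUnion₂.mp (hcover hx) with ⟨z, hz, hxz⟩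
  have hzX : z ∈ X := htX z hz
  have hxz' : ∀ g ∈ S z, x g = z g := fun g hg => hxz g hg
  have hyz' : ∀ g ∈ S z, y g = z g := fun g hg => by
    rw [← hagree g (Finset.mem_biUnion.mpr ⟨z, hz, hg⟩)]
    exact hxz' g hg
  rw [hS z hzX x hx hxz', hS z hzX y hy hyz']

/-- A memory set for the value at `1` of a shift-commuting map gives a translated
memory set for the value at any `g`. -/
lemma memory_shift {A B : Type*} {X : Set (G → A)}
    {f : (G → A) → (G → B)}
    (hXinv : ∀ g : G, ∀ x ∈ X, gshift g x ∈ X)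
    (hcomm : ∀ g : G, ∀ x ∈ X, f (gshift g x) = gshift g (f x))
    {S : Finset G}
    (hS : ∀ x ∈ X, ∀ y ∈ X, (∀ s ∈ S, x s = y s) → f x 1 = f y 1)
    (g : G) : ∀ x ∈ X, ∀ y ∈ X, (∀ s ∈ S, x (g * s) = y (g * s)) → f x g = f y g := by
  intro x hx y hy hagree
  have hx' := hXinv g⁻¹ x hx
  have hy' := hXinv g⁻¹ y hy
  have e1 : f (gshift g⁻¹ x) 1 = f x g := by
    rw [hcomm g⁻¹ x hx]; simp [gshift]
  have e2 : f (gshift g⁻¹ y) 1 = f y g := by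
    rw [hcomm g⁻¹ y hy]; simp [gshift]
  rw [← e1, ← e2]
  apply hS _ hx' _ hy'
  intro s hs
  simpa [gshift] using hagree s hs

/-- If `X` is determined by a finite window `W` (every configuration all of whose
`W`-patterns occur in `X` belongs to `X`), then `X` is an SFT. -/
lemma isSFT_of_window {A : Type*} [Finite A] [Nonempty A] (X : Set (G → A)) (W : Finset G)
    (h : X = {x | ∀ g : G, ∃ y ∈ X, ∀ w ∈ W, x (g * w) = y w}) : IsSFT X := by
  classical
  have : Fintype A := Fintype.ofFinite A
  obtain ⟨n, ⟨e⟩⟩ := Finite.exists_equiv_fin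
    {q : (↥W : Type _) → A // ¬ ∃ y ∈ X, ∀ w : (↥W : Type _), y (w : G) = q w}
  refine ⟨n, fun _ => W,
    fun i g => if hg : g ∈ W then ((e.symm i).1 ⟨g, hg⟩) else Classical.arbitrary A, ?_⟩
  ext x
  simp only [Set.mem_setOf_eq]
  constructor
  · intro hx i hap
    obtain ⟨g, hgp⟩ := hap
    have hx' : ∀ g : G, ∃ y ∈ X, ∀ w ∈ W, x (g * w) = y w := by rw [h] at hx; exact hx
    obtain ⟨y, hy, hagree⟩ := hx' g
    refine (e.symm i).2 ⟨y, hy, fun w => ?_⟩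
    have h2 := hgp (w : G) w.2
    dsimp only at h2
    rw [dif_pos w.2] at h2
    rw [← hagree (w : G) w.2, h2]
  · intro hx
    rw [h]
    intro g
    by_contra hcon
    push_neg at hcon
    set q : (↥W : Type _) → A := fun w => x (g * (w : G)) with hq
    have hqQ : ¬ ∃ y ∈ X, ∀ w : (↥W : Type _), y (w : G) = q w := by
      rintro ⟨y, hy, hyq⟩
      obtain ⟨w, hw, hne⟩ := hcon y hy
      exact hne (hyq ⟨w, hw⟩).symm
    refine hx (e ⟨q, hqQ⟩) ⟨g, fun d hd => ?_⟩
    dsimp only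
    rw [dif_pos hd, Equiv.symm_apply_apply]

end Aux

/-- A retract of a subshift of finite type is of finite type. -/
theorem retract_of_sft_isSFT {A B : Type*}
    [TopologicalSpace A] [DiscreteTopology A] [Finite A]
    [TopologicalSpace B] [DiscreteTopology B] [Finite B]
    (X : Set (G → A)) (Y : Set (G → B))
    (hX : IsSubshift X) (hY : IsSubshift Y)
    (hSFT : IsSFT Y) (hret : IsRetractOf X Y) :
    IsSFT X := by
  classical
  obtain ⟨f, r, hf, hr, hrf⟩ := hret
  obtain ⟨n, D, p, hYeq⟩ := hSFT
  rcases isEmpty_or_nonempty A with hA | hA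
  · refine ⟨0, Fin.elim0, Fin.elim0, ?_⟩
    ext x
    exact isEmptyElim (x 1)
  · have hXc : IsCompact X := hX.1.isCompact
    have hYc : IsCompact Y := hY.1.isCompact
    obtain ⟨S, hS⟩ := exists_memory hXc ((continuous_apply (1 : G)).comp_continuousOn hf.1)
    obtain ⟨T, hT⟩ := exists_memory hYc ((continuous_apply (1 : G)).comp_continuousOn hr.1)
    set E : Finset G := Finset.univ.biUnion D with hE
    set W : Finset G := (({1} ∪ S) ∪ T * S) ∪ E * S with hW
    have h1W : (1 : G) ∈ W := by
      exact Finset.mem_union_left _ (Finset.mem_union_left _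
        (Finset.mem_union_left _ (Finset.mem_singleton_self 1)))
    have hSW : ∀ s ∈ S, s ∈ W := fun s hs =>
      Finset.mem_union_left _ (Finset.mem_union_left _ (Finset.mem_union_right _ hs))
    have hTSW : ∀ t ∈ T, ∀ s ∈ S, t * s ∈ W := fun t ht s hs =>
      Finset.mem_union_left _ (Finset.mem_union_right _ (Finset.mul_mem_mul ht hs))
    have hESW : ∀ i : Fin n, ∀ d ∈ D i, ∀ s ∈ S, d * s ∈ W := fun i d hd s hs =>
      Finset.mem_union_right _
        (Finset.mul_mem_mul (Finset.mem_biUnion.mpr ⟨i, Finset.mem_univ i, hd⟩) hs)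
    apply isSFT_of_window X W
    ext x
    simp only [Set.mem_setOf_eq]
    constructor
    · intro hx g
      refine ⟨gshift g⁻¹ x, hX.2 g⁻¹ x hx, fun w _ => ?_⟩
      simp [gshift]
    · intro hx
      choose y hyX hyagree using hx
      set z : G → (G → A) := fun g => gshift g (y g) with hz
      have hzX : ∀ g, z g ∈ X := fun g => hX.2 g (y g) (hyX g)
      have hzagree : ∀ g : G, ∀ w ∈ W, z g (g * w) = x (g * w) := by
        intro g w hw
        have : z g (g * w) = y g w := by simp [hz, gshift]
        rw [this]
        exact (hyagree g w hw).symm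
      set F : G → B := fun g => f (z g) g with hF
      have claim1 : ∀ g h : G, (∀ s ∈ S, ∃ w ∈ W, h * s = g * w) → f (z g) h = F h := by
        intro g h hcond
        apply memory_shift hX.2 hf.2.2 hS h (z g) (hzX g) (z h) (hzX h)
        intro s hs
        obtain ⟨w, hw, hww⟩ := hcond s hs
        rw [hww, hzagree g w hw, ← hww, hzagree h s (hSW s hs)]
      have hFY : F ∈ Y := by
        rw [hYeq]
        simp only [Set.mem_setOf_eq]
        intro i hap
        obtain ⟨g, hgp⟩ := hap
        have hfz : f (z g) ∈ Y := hf.2.1 (hzX g)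
        rw [hYeq] at hfz
        refine hfz i ⟨g, fun d hd => ?_⟩
        rw [← hgp d hd]
        apply claim1
        intro s hs
        exact ⟨d * s, hESW i d hd s hs, mul_assoc g d s⟩
      have hrF : r F = x := by
        funext g
        have h1 : r F g = r (f (z g)) g := by
          apply memory_shift hY.2 hr.2.2 hT g F hFY (f (z g)) (hf.2.1 (hzX g))
          intro t ht
          exact (claim1 g (g * t) (fun s hs =>
            ⟨t * s, hTSW t ht s hs, mul_assoc g t s⟩)).symm
        rw [h1, hrf (z g) (hzX g)]
        have h2 := hzagree g 1 h1W
        simpa using h2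
      rw [← hrF]
      exact hr.2.1 hFY
end

section
/- Let X be a subshift on a group G containing a fixed point ā (the constant configuration with symbol a). If there exists a homotopy between the identity map on X and the constant map x ↦ ā, then the two projections π₁, π₂ : X × X → X are 2-step homotopic; conversely, if the two projections are homotopic, then the identity map on X is homotopic to the constant map x ↦ ā. -/
open Pointwise

variable {G : Type*} [Group G]

/-- A morphism `X × X → X` in curried form: jointly continuous, shift-commuting,
with values in `X`. -/
def IsPairMorphism {A : Type*} [TopologicalSpace A] (X : Set (G → A))
    (f : (G → A) → (G → A) → (G → A)) : Prop :=
  ContinuousOn (fun p : (G → A) × (G → A) => f p.1 p.2) (X ×ˢ X) ∧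
  (∀ x ∈ X, ∀ y ∈ X, f x y ∈ X) ∧
  (∀ (g : G), ∀ x ∈ X, ∀ y ∈ X, f (gshift g x) (gshift g y) = gshift g (f x y))

/-- A homotopy between two morphisms `X × X → X` (in curried form). -/
def IsPairHomotopy {A : Type*} [TopologicalSpace A] (X : Set (G → A))
    (f g : (G → A) → (G → A) → (G → A))
    (h : (G → Bool) → (G → A) → (G → A) → (G → A)) : Prop :=
  ContinuousOn (fun p : (G → Bool) × (G → A) × (G → A) => h p.1 p.2.1 p.2.2)
    (Set.univ ×ˢ X ×ˢ X) ∧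
  (∀ t, ∀ x ∈ X, ∀ y ∈ X, h t x y ∈ X) ∧
  (∀ (g : G), ∀ t, ∀ x ∈ X, ∀ y ∈ X,
    h (gshift g t) (gshift g x) (gshift g y) = gshift g (h t x y)) ∧
  (∀ x ∈ X, ∀ y ∈ X, h (fun _ => false) x y = f x y) ∧
  (∀ x ∈ X, ∀ y ∈ X, h (fun _ => true) x y = g x y)

/-- For a subshift `X` containing the fixed point `ā`: if the identity is homotopic to the
constant map `x ↦ ā`, then the two projections of `X × X` are 2-step homotopic; and if the
two projections are homotopic, then the identity is homotopic to `x ↦ ā`. -/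
theorem fixed_point_contractibility_lemma {A : Type*}
    [TopologicalSpace A] [DiscreteTopology A] [Finite A]
    (X : Set (G → A)) (hX : IsSubshift X) (a : A) (ha : (fun _ : G => a) ∈ X) :
    ((∃ h, IsHomotopy X X id (fun _ => (fun _ : G => a)) h) →
      ∃ m, IsPairMorphism X m ∧
        (∃ h₁, IsPairHomotopy X (fun x _ => x) m h₁) ∧
        (∃ h₂, IsPairHomotopy X m (fun _ y => y) h₂)) ∧
    ((∃ h, IsPairHomotopy X (fun x _ => x) (fun _ y => y) h) →
      ∃ h, IsHomotopy X X id (fun _ => (fun _ : G => a)) h) := by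
  constructor
  · rintro ⟨h, hc, hmem, hsh, h0, h1⟩
    refine ⟨fun _ _ => (fun _ : G => a), ⟨continuousOn_const, fun _ _ _ _ => ha,
      fun g x _ y _ => rfl⟩, ⟨fun t x _ => h t x, ?_, ?_, ?_, ?_, ?_⟩,
      ⟨fun t _ y => h (fun g => !t g) y, ?_, ?_, ?_, ?_, ?_⟩⟩
    · exact hc.comp (continuous_fst.prodMk (continuous_fst.comp continuous_snd)).continuousOn
        (fun p hp => ⟨trivial, hp.2.1⟩)
    · exact fun t x hx y _ => hmem t x hx
    · exact fun g t x hx y _ => hsh g t x hx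
    · exact fun x hx y _ => h0 x hx
    · exact fun x hx y _ => h1 x hx
    · refine hc.comp (Continuous.prodMk ?_
        (continuous_snd.comp continuous_snd)).continuousOn (fun p hp => ⟨trivial, hp.2.2⟩)
      exact continuous_pi fun g =>
        (continuous_of_discreteTopology (f := Bool.not)).comp
          ((continuous_apply g).comp continuous_fst)
    · exact fun t x _ y hy => hmem _ y hy
    · intro g t x _ y hy
      exact hsh g (fun g' => !t g') y hy
    · intro x _ y hy
      simpa using h1 y hy
    · intro x _ y hy
      simpa using h0 y hy
  · rintro ⟨h, hc, hmem, hsh, h0, h1⟩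
    refine ⟨fun t x => h t x (fun _ : G => a), ?_, ?_, ?_, ?_, ?_⟩
    · exact hc.comp (continuous_fst.prodMk (continuous_snd.prodMk continuous_const)).continuousOn
        (fun p hp => ⟨trivial, hp.2, ha⟩)
    · exact fun t x hx => hmem t x hx _ ha
    · intro g t x hx
      exact hsh g t x hx _ ha
    · exact fun x hx => h0 x hx _ ha
    · exact fun x hx => h1 x hx _ ha
end

section
/- Every contractible subshift of finite type with a fixed point is equiconnected. -/
open Pointwise

variable {G : Type*} [Group G]

/-- `X` is equiconnected: the two projections `X × X → X` are homotopic via a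
homotopy fixing the diagonal. -/
def IsEquiconnected {A : Type*} [TopologicalSpace A] (X : Set (G → A)) : Prop :=
  ∃ h, IsContraction X h ∧ ∀ t, ∀ x ∈ X, h t x x = x

/-!
A contractible SFT `X` with a fixed point `ā` is a retract of the full shift. The contraction `h`
is a sliding block code, so `h t x ā` can be evaluated at a cell `g` for any configuration `x`
that looks near `g` like a point of `X`. Feeding it the indicator of the cells near a forbidden
pattern of `x` as time parameter gives the retraction: deep inside the defects it outputs `ā`,
elsewhere `x` is locally extendable to a point of `X` (a compactness argument bounds the window
needed) and the output looks locally like a point of `X`. Composing the retraction with the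
cell-by-cell mixing of two configurations gives a homotopy that fixes the diagonal.
-/

theorem IsCompact.exists_finset_forall_eq_of_continuousOn {ι B C : Type*}
    [TopologicalSpace B] [DiscreteTopology B] [TopologicalSpace C] [DiscreteTopology C]
    {K : Set (ι → B)} (hK : IsCompact K) {φ : (ι → B) → C} (hφ : ContinuousOn φ K) :
    ∃ I : Finset ι, ∀ x ∈ K, ∀ y ∈ K, (∀ i ∈ I, x i = y i) → φ x = φ y := by
  have hloc : ∀ x ∈ K, ∃ I : Finset ι, ∀ y ∈ K, (∀ i ∈ I, y i = x i) → φ y = φ x := by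
    intro x hx
    obtain ⟨U, hU, hUφ⟩ := mem_nhdsWithin_iff_exists_mem_nhds_inter.mp
      (hφ x hx ((isOpen_discrete {φ x}).mem_nhds rfl))
    rw [nhds_pi] at hU
    obtain ⟨I, s, hs, hsU⟩ := Filter.mem_pi'.mp hU
    refine ⟨I, fun y hy hyx => hUφ ⟨hsU fun i hi => ?_, hy⟩⟩
    rw [hyx i hi]
    exact mem_of_mem_nhds (hs i)
  choose! I hI using hloc
  obtain ⟨t, htK, hcover⟩ := hK.elim_nhds_subcover (fun x => (I x : Set ι).pi fun i => {x i})
    fun x _ => set_pi_mem_nhds (I x).finite_toSet fun i _ => (isOpen_discrete _).mem_nhds rfl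
  classical
  refine ⟨t.biUnion I, fun x hx y hy hxy => ?_⟩
  obtain ⟨u, hut, hxu⟩ := Set.mem_iUnion₂.mp (hcover hx)
  have hyu : ∀ i ∈ I u, y i = u i := fun i hi =>
    (hxy i (Finset.mem_biUnion.mpr ⟨u, hut, hi⟩)).symm.trans (hxu i hi)
  rw [hI u (htK u hut) x hx hxu, hI u (htK u hut) y hy hyu]

theorem continuous_of_forall_exists_finset_forall_eq {ι κ B C : Type*}
    [TopologicalSpace B] [DiscreteTopology B] [TopologicalSpace C] {f : (ι → B) → κ → C}
    (hf : ∀ k, ∃ I : Finset ι, ∀ x y, (∀ i ∈ I, x i = y i) → f x k = f y k) :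
    Continuous f := by
  refine continuous_pi fun k => ?_
  obtain ⟨I, hI⟩ := hf k
  refine IsLocallyConstant.continuous fun s => isOpen_iff_mem_nhds.mpr fun x hx => ?_
  filter_upwards [set_pi_mem_nhds I.finite_toSet fun i _ => (isOpen_discrete {x i}).mem_nhds rfl]
    with y hy
  rwa [Set.mem_preimage, hI y x fun i hi => hy i hi]

@[simp]
theorem gshift_apply {A : Type*} (g : G) (x : G → A) (k : G) : gshift g x k = x (g⁻¹ * k) := rfl

def IsMemorySetOn {A : Type*} (X : Set (G → A))
    (h : (G → Bool) → (G → A) → (G → A) → (G → A)) (F : Finset G) : Prop :=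
  ∀ (g : G) (t t' : G → Bool), ∀ x ∈ X, ∀ x' ∈ X, ∀ y ∈ X, ∀ y' ∈ X,
    (∀ k ∈ F, t (g * k) = t' (g * k)) → (∀ k ∈ F, x (g * k) = x' (g * k)) →
    (∀ k ∈ F, y (g * k) = y' (g * k)) → h t x y g = h t' x' y' g

theorem IsContraction.apply_eq_apply_one {A : Type*} [TopologicalSpace A] {X : Set (G → A)}
    {h : (G → Bool) → (G → A) → (G → A) → (G → A)} (hh : IsContraction X h) (g : G)
    (t : G → Bool) {x y : G → A} (hx : x ∈ X) (hy : y ∈ X) :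
    h t x y g = h (gshift g⁻¹ t) (gshift g⁻¹ x) (gshift g⁻¹ y) 1 := by
  simp [hh.2.2.1 g⁻¹ t x hx y hy]

/-- Curtis–Hedlund–Lyndon for a contraction: compactness of `X × X` makes its continuity uniform,
and equivariance moves the window to every site. -/
theorem IsContraction.exists_isMemorySetOn {A : Type*} [TopologicalSpace A] [DiscreteTopology A]
    [Finite A] {X : Set (G → A)} (hX : IsSubshift X)
    {h : (G → Bool) → (G → A) → (G → A) → (G → A)} (hh : IsContraction X h) :
    ∃ F, IsMemorySetOn X h F := by
  let e : (G → Bool × A × A) → (G → Bool) × (G → A) × (G → A) :=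
    fun z => (fun k => (z k).1, fun k => (z k).2.1, fun k => (z k).2.2)
  have he : Continuous e := by fun_prop
  have hK : IsCompact (e ⁻¹' (Set.univ ×ˢ X ×ˢ X)) :=
    ((isClosed_univ.prod (hX.1.prod hX.1)).preimage he).isCompact
  obtain ⟨F, hF⟩ := hK.exists_finset_forall_eq_of_continuousOn
    ((continuous_apply 1).comp_continuousOn (hh.1.comp he.continuousOn (Set.mapsTo_preimage _ _)))
  refine ⟨F, fun g t t' x hx x' hx' y hy y' hy' ht hxx hyy => ?_⟩
  rw [hh.apply_eq_apply_one g t hx hy, hh.apply_eq_apply_one g t' hx' hy']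
  exact hF (fun k => (gshift g⁻¹ t k, gshift g⁻¹ x k, gshift g⁻¹ y k))
    ⟨trivial, hX.2 _ x hx, hX.2 _ y hy⟩
    (fun k => (gshift g⁻¹ t' k, gshift g⁻¹ x' k, gshift g⁻¹ y' k))
    ⟨trivial, hX.2 _ x' hx', hX.2 _ y' hy'⟩
    fun k hk => by simp [ht k hk, hxx k hk, hyy k hk]

section PatternAvoiding

variable {A : Type*} {n : ℕ} {D : Fin n → Finset G} {p : Fin n → G → A}

def AppearsAt (x : G → A) (D : Finset G) (p : G → A) (g : G) : Prop :=
  ∀ d ∈ D, x (g * d) = p d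

variable (D p) in
def patternAvoiding : Set (G → A) := {x | ∀ i, ¬ Appears x (D i) (p i)}

theorem isSFT_iff {X : Set (G → A)} :
    IsSFT X ↔ ∃ (n : ℕ) (D : Fin n → Finset G) (p : Fin n → G → A), X = patternAvoiding D p :=
  Iff.rfl

theorem mem_patternAvoiding {x : G → A} :
    x ∈ patternAvoiding D p ↔ ∀ i g, ¬ AppearsAt x (D i) (p i) g := by
  simp [patternAvoiding, Appears, AppearsAt]

theorem appearsAt_congr {x y : G → A} {E : Finset G} {q : G → A} {g : G}
    (hxy : ∀ d ∈ E, x (g * d) = y (g * d)) : AppearsAt x E q g ↔ AppearsAt y E q g :=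
  forall₂_congr fun d hd => by rw [hxy d hd]

theorem appearsAt_gshift {x : G → A} {E : Finset G} {q : G → A} {g k : G} :
    AppearsAt (gshift g x) E q k ↔ AppearsAt x E q (g⁻¹ * k) := by
  simp [AppearsAt, mul_assoc]

theorem gshift_mem_patternAvoiding {x : G → A} (hx : x ∈ patternAvoiding D p) (g : G) :
    gshift g x ∈ patternAvoiding D p := by
  rw [mem_patternAvoiding] at hx ⊢
  intro i k
  rw [appearsAt_gshift]
  exact hx i _

theorem not_appearsAt_of_eqOn {W : Finset G} (hDW : ∀ i, D i ⊆ W) {y z : G → A}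
    (hy : y ∈ patternAvoiding D p) {g : G} (hzy : ∀ d ∈ W, z (g * d) = y (g * d)) (i : Fin n) :
    ¬ AppearsAt z (D i) (p i) g := by
  rw [appearsAt_congr fun d hd => hzy d (hDW i hd)]
  exact mem_patternAvoiding.mp hy i g

theorem isOpen_setOf_appearsAt [TopologicalSpace A] [DiscreteTopology A] {E : Finset G}
    {q : G → A} {g : G} : IsOpen {x : G → A | AppearsAt x E q g} := by
  simp only [AppearsAt, Set.ofPred_forall]
  exact isOpen_biInter_finset fun d _ =>
    (continuous_apply (A := fun _ => A) (g * d)).isOpen_preimage {q d} (isOpen_discrete _)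

/-- The closed sets of configurations free of forbidden patterns on `C` decrease to the shift,
which lies in the open set of configurations agreeing on `E` with one of its points. -/
theorem exists_finset_forall_exists_mem_patternAvoiding [Finite A] (E : Finset G) :
    ∃ C : Finset G, ∀ x : G → A, (∀ c ∈ C, ∀ i, ¬ AppearsAt x (D i) (p i) c) →
      ∃ x' ∈ patternAvoiding D p, ∀ m ∈ E, x' m = x m := by
  classical
  let _ : TopologicalSpace A := ⊥
  have _ : DiscreteTopology A := ⟨rfl⟩
  let V : Finset G → Set (G → A) := fun C => {x | ∀ c ∈ C, ∀ i, ¬ AppearsAt x (D i) (p i) c}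
  have hV_closed : ∀ C, IsClosed (V C) := fun C => by
    simp only [V, Set.ofPred_forall]
    exact isClosed_biInter fun c _ => isClosed_iInter fun i => isOpen_setOf_appearsAt.isClosed_compl
  have hV_dir : Directed (· ⊇ ·) V := fun C C' =>
    ⟨C ∪ C', fun x hx c hc => hx c (Finset.mem_union_left _ hc),
      fun x hx c hc => hx c (Finset.mem_union_right _ hc)⟩
  obtain ⟨C, hC⟩ := exists_subset_nhds_of_isCompact' hV_dir (fun C => (hV_closed C).isCompact)
    hV_closed (U := {x | ∃ x' ∈ patternAvoiding D p, ∀ m ∈ E, x' m = x m}) fun x hx => by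
      have hxX : x ∈ patternAvoiding D p := mem_patternAvoiding.mpr fun i g =>
        Set.mem_iInter.mp hx {g} g (Finset.mem_singleton_self g) i
      filter_upwards [set_pi_mem_nhds E.finite_toSet fun m _ =>
        (isOpen_discrete {x m}).mem_nhds rfl] with y hy
      exact ⟨x, hxX, fun m hm => (hy m hm).symm⟩
  exact ⟨C, fun x hx => hC hx⟩

theorem exists_finset_forall_exists_mem_patternAvoiding_translate [Finite A] (E : Finset G) :
    ∃ C : Finset G, ∀ (g : G) (x : G → A), (∀ c ∈ C, ∀ i, ¬ AppearsAt x (D i) (p i) (g * c)) →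
      ∃ x' ∈ patternAvoiding D p, ∀ m ∈ E, x' (g * m) = x (g * m) := by
  obtain ⟨C, hC⟩ := exists_finset_forall_exists_mem_patternAvoiding (D := D) (p := p) E
  refine ⟨C, fun g x hx => ?_⟩
  obtain ⟨x', hx', hx'E⟩ := hC (gshift g⁻¹ x) fun c hc i => by
    rw [appearsAt_gshift, inv_inv]
    exact hx c hc i
  exact ⟨gshift g x', gshift_mem_patternAvoiding hx' g, fun m hm => by simp [hx'E m hm]⟩

end PatternAvoiding

section Retraction

variable {A : Type*} {n : ℕ} {D : Fin n → Finset G} {p : Fin n → G → A}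
  {h : (G → Bool) → (G → A) → (G → A) → (G → A)} {F N : Finset G} {a : A}

open Classical in
variable (D p) in
noncomputable def defectNear (N : Finset G) (x : G → A) : G → Bool :=
  fun g => decide (∃ k ∈ N, ∃ i, AppearsAt x (D i) (p i) (g * k))

theorem defectNear_eq_false_of_mem {x : G → A} (hx : x ∈ patternAvoiding D p) :
    defectNear D p N x = fun _ => false := by
  funext g
  simpa [defectNear] using fun k _ i => mem_patternAvoiding.mp hx i (g * k)

theorem defectNear_gshift (g : G) (x : G → A) :
    defectNear D p N (gshift g x) = gshift g (defectNear D p N x) := by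
  funext k
  simp [defectNear, appearsAt_gshift, mul_assoc]

theorem defectNear_apply_eq_of_eqOn [DecidableEq G] {W : Finset G} (hDW : ∀ i, D i ⊆ W)
    {x y : G → A} {g : G} (hxy : ∀ m ∈ N * W, x (g * m) = y (g * m)) :
    defectNear D p N x g = defectNear D p N y g := by
  refine decide_eq_decide.mpr <| exists_congr fun k => and_congr_right fun hk =>
    exists_congr fun i => appearsAt_congr fun d hd => ?_
  simpa [mul_assoc] using hxy (k * d) (Finset.mul_mem_mul hk (hDW i hd))

open Classical in
/-- The homotopy `h · · ā` run for the time `defectNear x`, which is `1` near the forbidden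
patterns of `x`. It is evaluated at `g` through any point of the shift agreeing with `x` near `g`,
which is well defined once `F` is a memory set of `h`. -/
noncomputable def sftRetraction (h : (G → Bool) → (G → A) → (G → A) → (G → A)) (F N : Finset G)
    (D : Fin n → Finset G) (p : Fin n → G → A) (a : A) (x : G → A) (g : G) : A :=
  if hg : ∃ x' ∈ patternAvoiding D p, ∀ k ∈ F, x' (g * k) = x (g * k)
  then h (defectNear D p N x) hg.choose (fun _ => a) g else a

theorem sftRetraction_apply_of_eqOn (hF : IsMemorySetOn (patternAvoiding D p) h F)
    (ha : (fun _ => a) ∈ patternAvoiding D p) {x x' : G → A} (hx' : x' ∈ patternAvoiding D p)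
    {g : G} (hxx' : ∀ k ∈ F, x' (g * k) = x (g * k)) :
    sftRetraction h F N D p a x g = h (defectNear D p N x) x' (fun _ => a) g := by
  have hg : ∃ x' ∈ patternAvoiding D p, ∀ k ∈ F, x' (g * k) = x (g * k) := ⟨x', hx', hxx'⟩
  rw [sftRetraction, dif_pos hg]
  exact hF g _ _ _ hg.choose_spec.1 _ hx' _ ha _ ha (fun _ _ => rfl)
    (fun k hk => (hg.choose_spec.2 k hk).trans (hxx' k hk).symm) fun _ _ => rfl

theorem sftRetraction_apply_of_not_exists {x : G → A} {g : G}
    (hg : ¬ ∃ x' ∈ patternAvoiding D p, ∀ k ∈ F, x' (g * k) = x (g * k)) :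
    sftRetraction h F N D p a x g = a := by
  rw [sftRetraction, dif_neg hg]

theorem sftRetraction_of_mem [TopologicalSpace A] (hh : IsContraction (patternAvoiding D p) h)
    (hF : IsMemorySetOn (patternAvoiding D p) h F) (ha : (fun _ => a) ∈ patternAvoiding D p)
    {x : G → A} (hx : x ∈ patternAvoiding D p) : sftRetraction h F N D p a x = x := by
  obtain ⟨-, -, -, hstart, -⟩ := hh
  funext g
  rw [sftRetraction_apply_of_eqOn hF ha hx fun _ _ => rfl, defectNear_eq_false_of_mem hx,
    hstart x hx _ ha]

theorem sftRetraction_gshift [TopologicalSpace A] (hh : IsContraction (patternAvoiding D p) h)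
    (hF : IsMemorySetOn (patternAvoiding D p) h F) (ha : (fun _ => a) ∈ patternAvoiding D p)
    (g : G) (x : G → A) :
    sftRetraction h F N D p a (gshift g x) = gshift g (sftRetraction h F N D p a x) := by
  obtain ⟨-, -, hequiv, -, -⟩ := hh
  funext k
  rw [gshift_apply]
  by_cases hk : ∃ x' ∈ patternAvoiding D p, ∀ j ∈ F, x' (g⁻¹ * k * j) = x (g⁻¹ * k * j)
  · obtain ⟨x', hx', hxx'⟩ := hk
    rw [sftRetraction_apply_of_eqOn hF ha hx' hxx', sftRetraction_apply_of_eqOn hF ha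
      (gshift_mem_patternAvoiding hx' g) fun j hj => by simpa [mul_assoc] using hxx' j hj,
      defectNear_gshift]
    exact congr_fun (hequiv g _ x' hx' _ ha) k
  · rw [sftRetraction_apply_of_not_exists hk, sftRetraction_apply_of_not_exists]
    rintro ⟨x', hx', hxx'⟩
    exact hk ⟨gshift g⁻¹ x', gshift_mem_patternAvoiding hx' _,
      fun j hj => by simpa [mul_assoc] using hxx' j hj⟩

theorem sftRetraction_apply_eq_of_eqOn [DecidableEq G]
    (hF : IsMemorySetOn (patternAvoiding D p) h F)
    (ha : (fun _ => a) ∈ patternAvoiding D p) {W : Finset G} (hDW : ∀ i, D i ⊆ W) {x y : G → A}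
    {g : G} (hxy : ∀ m ∈ F ∪ F * (N * W), x (g * m) = y (g * m)) :
    sftRetraction h F N D p a x g = sftRetraction h F N D p a y g := by
  have hxyF : ∀ k ∈ F, x (g * k) = y (g * k) := fun k hk => hxy k (Finset.mem_union_left _ hk)
  by_cases hg : ∃ x' ∈ patternAvoiding D p, ∀ k ∈ F, x' (g * k) = x (g * k)
  · obtain ⟨x', hx', hxx'⟩ := hg
    rw [sftRetraction_apply_of_eqOn hF ha hx' hxx',
      sftRetraction_apply_of_eqOn hF ha hx' fun k hk => (hxx' k hk).trans (hxyF k hk)]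
    refine hF g _ _ _ hx' _ hx' _ ha _ ha (fun k hk => ?_) (fun _ _ => rfl) fun _ _ => rfl
    refine defectNear_apply_eq_of_eqOn hDW fun m hm => ?_
    simpa [mul_assoc] using hxy (k * m) (Finset.mem_union_right _ (Finset.mul_mem_mul hk hm))
  · rw [sftRetraction_apply_of_not_exists hg, sftRetraction_apply_of_not_exists]
    rintro ⟨x', hx', hxx'⟩
    exact hg ⟨x', hx', fun k hk => (hxx' k hk).trans (hxyF k hk).symm⟩

theorem continuous_sftRetraction [TopologicalSpace A] [DiscreteTopology A]
    (hF : IsMemorySetOn (patternAvoiding D p) h F) (ha : (fun _ => a) ∈ patternAvoiding D p) :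
    Continuous (sftRetraction h F N D p a) := by
  classical
  refine continuous_of_forall_exists_finset_forall_eq fun g =>
    ⟨(F ∪ F * (N * Finset.univ.sup D)).image (g * ·), fun x y hxy => ?_⟩
  exact sftRetraction_apply_eq_of_eqOn hF ha (fun i => Finset.le_sup (Finset.mem_univ i))
    fun m hm => hxy _ (Finset.mem_image_of_mem _ hm)

/-- Either `defectNear x` is `1` on all of `g • W • F`, so that `h` has reached `ā` there, or
it is `0` at some `g * m` there; then `x` is free of forbidden patterns on `g • C ⊆ (g * m) • N`,
hence agrees on `g • W • F` with a point `x'` of the shift, and `h (defectNear x) x' ā` is in the shift. -/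
theorem exists_mem_eqOn_sftRetraction [DecidableEq G] [TopologicalSpace A]
    (hh : IsContraction (patternAvoiding D p) h)
    (hF : IsMemorySetOn (patternAvoiding D p) h F) (ha : (fun _ => a) ∈ patternAvoiding D p)
    {W C : Finset G}
    (hC : ∀ (g : G) (x : G → A), (∀ c ∈ C, ∀ i, ¬ AppearsAt x (D i) (p i) (g * c)) →
      ∃ x' ∈ patternAvoiding D p, ∀ m ∈ W * F, x' (g * m) = x (g * m))
    (hN : (W * F)⁻¹ * C ⊆ N) (x : G → A) (g : G) :
    ∃ y ∈ patternAvoiding D p, ∀ d ∈ W, sftRetraction h F N D p a x (g * d) = y (g * d) := by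
  obtain ⟨-, hmem, -, -, hend⟩ := hh
  by_cases hdef : ∀ m ∈ W * F, defectNear D p N x (g * m) = true
  · refine ⟨fun _ => a, ha, fun d hd => ?_⟩
    by_cases hgd : ∃ x' ∈ patternAvoiding D p, ∀ k ∈ F, x' (g * d * k) = x (g * d * k)
    · obtain ⟨x', hx', hxx'⟩ := hgd
      rw [sftRetraction_apply_of_eqOn hF ha hx' hxx']
      refine (hF _ _ _ _ hx' _ hx' _ ha _ ha (fun k hk => ?_) (fun _ _ => rfl) fun _ _ => rfl).trans
        (congr_fun (hend x' hx' _ ha) _)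
      simpa [mul_assoc] using hdef (d * k) (Finset.mul_mem_mul hd hk)
    · exact sftRetraction_apply_of_not_exists hgd
  · push Not at hdef
    obtain ⟨m, hm, hτ⟩ := hdef
    obtain ⟨x', hx', hxx'⟩ := hC g x fun c hc i hi => hτ <| by
      simp only [defectNear, decide_eq_true_eq]
      refine ⟨m⁻¹ * c, hN (Finset.mul_mem_mul (Finset.inv_mem_inv hm) hc), i, ?_⟩
      rwa [mul_assoc, mul_inv_cancel_left]
    refine ⟨h (defectNear D p N x) x' (fun _ => a), hmem _ x' hx' _ ha, fun d hd => ?_⟩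
    exact sftRetraction_apply_of_eqOn hF ha hx' fun k hk => by
      simpa [mul_assoc] using hxx' (d * k) (Finset.mul_mem_mul hd hk)

theorem sftRetraction_mem [DecidableEq G] [TopologicalSpace A]
    (hh : IsContraction (patternAvoiding D p) h)
    (hF : IsMemorySetOn (patternAvoiding D p) h F) (ha : (fun _ => a) ∈ patternAvoiding D p)
    {W C : Finset G} (hDW : ∀ i, D i ⊆ W)
    (hC : ∀ (g : G) (x : G → A), (∀ c ∈ C, ∀ i, ¬ AppearsAt x (D i) (p i) (g * c)) →
      ∃ x' ∈ patternAvoiding D p, ∀ m ∈ W * F, x' (g * m) = x (g * m))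
    (hN : (W * F)⁻¹ * C ⊆ N) (x : G → A) : sftRetraction h F N D p a x ∈ patternAvoiding D p := by
  refine mem_patternAvoiding.mpr fun i g => ?_
  obtain ⟨y, hy, hxy⟩ := exists_mem_eqOn_sftRetraction hh hF ha hC hN x g
  exact not_appearsAt_of_eqOn hDW hy hxy i

end Retraction

theorem exists_retraction_of_isContractible {A : Type*} [TopologicalSpace A]
    [DiscreteTopology A] [Finite A] {X : Set (G → A)} (hX : IsSubshift X) (hSFT : IsSFT X)
    {a : A} (ha : (fun _ => a) ∈ X) (hc : IsContractible X) :
    ∃ r, IsMorphismOn Set.univ X r ∧ ∀ x ∈ X, r x = x := by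
  classical
  obtain ⟨n, D, p, rfl⟩ := isSFT_iff.mp hSFT
  obtain ⟨h, hh⟩ := hc
  obtain ⟨F, hF⟩ := hh.exists_isMemorySetOn hX
  have hDW : ∀ i, D i ⊆ Finset.univ.sup D := fun i => Finset.le_sup (Finset.mem_univ i)
  obtain ⟨C, hC⟩ :=
    exists_finset_forall_exists_mem_patternAvoiding_translate (D := D) (p := p)
      (Finset.univ.sup D * F)
  exact ⟨sftRetraction h F ((Finset.univ.sup D * F)⁻¹ * C) D p a,
    ⟨(continuous_sftRetraction hF ha).continuousOn,
      fun x _ => sftRetraction_mem hh hF ha hDW hC subset_rfl x,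
      fun g x _ => sftRetraction_gshift hh hF ha g x⟩,
    fun x hx => sftRetraction_of_mem hh hF ha hx⟩

theorem isEquiconnected_of_retraction {A : Type*} [TopologicalSpace A] {X : Set (G → A)}
    {r : (G → A) → G → A} (hr : IsMorphismOn Set.univ X r) (hrX : ∀ x ∈ X, r x = x) :
    IsEquiconnected X := by
  let mix : (G → Bool) → (G → A) → (G → A) → G → A := fun t x y g => cond (t g) (y g) (x g)
  have hcond : Continuous fun b : Bool × A × A => cond b.1 b.2.2 b.2.1 :=
    continuous_prod_of_discrete_left.mpr fun b => by
      cases b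
      exacts [continuous_fst, continuous_snd]
  have hmix : Continuous fun q : (G → Bool) × (G → A) × (G → A) => mix q.1 q.2.1 q.2.2 :=
    continuous_pi fun g =>
      hcond.comp (f := fun q : (G → Bool) × (G → A) × (G → A) => (q.1 g, q.2.1 g, q.2.2 g))
        (by fun_prop)
  refine ⟨fun t x y => r (mix t x y), ⟨((continuousOn_univ.mp hr.1).comp hmix).continuousOn,
    fun t x _ y _ => hr.2.1 trivial, fun g t x _ y _ => hr.2.2 g (mix t x y) trivial,
    fun x hx y _ => hrX x hx, fun x _ y hy => hrX y hy⟩, fun t x hx => ?_⟩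
  simp only [mix, Bool.cond_self]
  exact hrX x hx

/-- Every contractible subshift of finite type with a fixed point is equiconnected. -/
theorem contractible_sft_fixed_point_equiconnected {A : Type*}
    [TopologicalSpace A] [DiscreteTopology A] [Finite A]
    (X : Set (G → A)) (hX : IsSubshift X) (hSFT : IsSFT X)
    (a : A) (ha : (fun _ : G => a) ∈ X) (hc : IsContractible X) :
    IsEquiconnected X := by
  obtain ⟨r, hr, hrX⟩ := exists_retraction_of_isContractible hX hSFT ha hc
  exact isEquiconnected_of_retraction hr hrX
end

section
/- Let G be a finitely generated group of subexponential growth with finite symmetric generating set S. Then G has the patching property: for every r ∈ ℕ there exists R ∈ ℕ such that the smallest family of subsets of G containing all left translates of the ball B_R, closed under subsets and under the almost-union operation A ∪ᵣ B = A°ʳ ∪ B°ʳ ∪ ((A ∪ B) \ (A·B_r ∩ B·B_r)), contains every ball B_n for n ∈ ℕ. Here A°ʳ = {a ∈ G : a·B_r ⊆ A}. -/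
open Pointwise

variable {G : Type*} [Group G]

/-- The ball of radius `r` for the word metric (around the identity). -/
def wball (S : Set G) (r : ℕ) : Set G := {g | wordDist S 1 g ≤ r}

/-- `A°ʳ = {a : a · B_r ⊆ A}`. -/
def shrinkSet (S : Set G) (r : ℕ) (A : Set G) : Set G :=
  {a | ∀ b ∈ wball S r, a * b ∈ A}

/-- The almost-union operation `A ∪ᵣ B = A°ʳ ∪ B°ʳ ∪ ((A ∪ B) \ (A·B_r ∩ B·B_r))`. -/
def almostUnion (S : Set G) (r : ℕ) (A B : Set G) : Set G :=
  shrinkSet S r A ∪ shrinkSet S r B ∪ ((A ∪ B) \ (A * wball S r ∩ B * wball S r))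

/-- The smallest family of subsets of `G` containing all left translates of the ball `B_R`,
closed under subsets and under the almost-union operation with parameter `r`. -/
inductive Patch (S : Set G) (r R : ℕ) : Set G → Prop
  | transBall (a : G) : Patch S r R ((fun g => a * g) '' wball S R)
  | subset {A B : Set G} : Patch S r R B → A ⊆ B → Patch S r R A
  | aunion {A B : Set G} : Patch S r R A → Patch S r R B → Patch S r R (almostUnion S r A B)

/-!
Patches are invariant under left translation, and since `(t • X)°ʳ = t • X°ʳ` and
`X°ʳ ∪ Y°ʳ ⊆ X ∪ᵣ Y`, pairing off translates shows by induction on `d` that any `2 ^ d` left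
translates of the `d`-fold shrinking of a patch `A` form a patch. If `1` lies in that shrinking,
which for `A = B_m` holds as soon as `d * r ≤ m`, then every finite set of at most `2 ^ d` points
is a patch. Subexponential growth gives `|B_{2m}| ≤ 2 ^ ⌊m / (r + 1)⌋` for all large `m`, so
`B_m` being a patch forces `B_{2m}` to be one; starting from `B_R` itself, all balls are patches.
-/

section WordMetric

variable {S : Set G}

theorem mem_wball_iff (hsym : ∀ s ∈ S, s⁻¹ ∈ S) (hgen : Subgroup.closure S = ⊤) {n : ℕ} {g : G} :
    g ∈ wball S n ↔ ∃ l : List G, (∀ s ∈ l, s ∈ S) ∧ l.length ≤ n ∧ l.prod = g := by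
  have hword : ∃ l : List G, (∀ s ∈ l, s ∈ S) ∧ l.prod = g := by
    have hg : g ∈ (Subgroup.closure S).toSubmonoid := by simp [hgen]
    rw [Subgroup.closure_toSubmonoid, Set.union_eq_left.2 fun s hs => by simpa using hsym _ hs]
      at hg
    exact Submonoid.exists_list_of_mem_closure hg
  simp only [wball, wordDist, inv_one, one_mul]
  constructor
  · intro hn
    obtain ⟨l₀, hl₀, hprod₀⟩ := hword
    obtain ⟨l, hl, hlen, hprod⟩ := Nat.sInf_mem (s := {n | ∃ l : List G,
      (∀ s ∈ l, s ∈ S) ∧ l.length = n ∧ l.prod = g}) ⟨l₀.length, l₀, hl₀, rfl, hprod₀⟩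
    exact ⟨l, hl, hlen ▸ hn, hprod⟩
  · rintro ⟨l, hl, hn, hprod⟩
    exact (Nat.sInf_le (by exact ⟨l, hl, rfl, hprod⟩)).trans hn

theorem one_mem_wball (n : ℕ) : (1 : G) ∈ wball S n :=
  (Nat.sInf_le (by exact ⟨[], by simp, rfl, by simp⟩)).trans (Nat.zero_le n)

theorem wball_mono {m n : ℕ} (h : m ≤ n) : wball S m ⊆ wball S n :=
  fun _ hg => le_trans hg h

theorem mul_mem_wball (hsym : ∀ s ∈ S, s⁻¹ ∈ S) (hgen : Subgroup.closure S = ⊤)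
    {m n : ℕ} {g h : G} (hg : g ∈ wball S m) (hh : h ∈ wball S n) : g * h ∈ wball S (m + n) := by
  obtain ⟨l₁, hl₁, hlen₁, rfl⟩ := (mem_wball_iff hsym hgen).1 hg
  obtain ⟨l₂, hl₂, hlen₂, rfl⟩ := (mem_wball_iff hsym hgen).1 hh
  refine (mem_wball_iff hsym hgen).2
    ⟨l₁ ++ l₂, ?_, by rw [List.length_append]; omega, List.prod_append⟩
  simpa [or_imp, forall_and] using And.intro hl₁ hl₂

theorem wball_finite (hS : S.Finite) (hsym : ∀ s ∈ S, s⁻¹ ∈ S) (hgen : Subgroup.closure S = ⊤)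
    (n : ℕ) : (wball S n).Finite := by
  have : Finite S := hS
  refine ((List.finite_length_le S n).image fun l => (l.map (↑)).prod).subset ?_
  intro g hg
  obtain ⟨l, hl, hlen, rfl⟩ := (mem_wball_iff hsym hgen).1 hg
  lift l to List S using hl
  exact ⟨l, by simpa using hlen, rfl⟩

end WordMetric

section Translation

variable (S : Set G) (r : ℕ)

theorem shrinkSet_mono {A B : Set G} (h : A ⊆ B) : shrinkSet S r A ⊆ shrinkSet S r B :=
  fun _ ha b hb => h (ha b hb)

theorem shrinkSet_smul (g : G) (A : Set G) : shrinkSet S r (g • A) = g • shrinkSet S r A := by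
  ext a
  simp only [shrinkSet, Set.mem_ofPred_eq, Set.mem_smul_set_iff_inv_smul_mem, smul_eq_mul,
    mul_assoc]

theorem almostUnion_smul (g : G) (A B : Set G) :
    almostUnion S r (g • A) (g • B) = g • almostUnion S r A B := by
  simp only [almostUnion, shrinkSet_smul, Set.smul_set_union, Set.smul_set_sdiff,
    Set.smul_set_inter, ← smul_mul_assoc]

theorem shrinkSet_union_subset_almostUnion (A B : Set G) :
    shrinkSet S r A ∪ shrinkSet S r B ⊆ almostUnion S r A B :=
  Set.subset_union_left

theorem wball_subset_shrinkSet_iterate (hsym : ∀ s ∈ S, s⁻¹ ∈ S)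
    (hgen : Subgroup.closure S = ⊤) (d k : ℕ) :
    wball S k ⊆ (shrinkSet S r)^[d] (wball S (k + d * r)) := by
  induction d generalizing k with
  | zero => simp
  | succ d ih =>
    rw [Function.iterate_succ_apply', show k + (d + 1) * r = k + r + d * r by ring]
    exact fun g hg => shrinkSet_mono S r (ih (k + r)) fun b hb => mul_mem_wball hsym hgen hg hb

theorem one_mem_shrinkSet_iterate_wball (hsym : ∀ s ∈ S, s⁻¹ ∈ S)
    (hgen : Subgroup.closure S = ⊤) {d m : ℕ} (h : d * r ≤ m) :
    (1 : G) ∈ (shrinkSet S r)^[d] (wball S m) := by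
  have := wball_subset_shrinkSet_iterate S r hsym hgen d (m - d * r) (one_mem_wball _)
  rwa [Nat.sub_add_cancel h] at this

end Translation

namespace Patch

variable {S : Set G} {r R : ℕ}

theorem smul {A : Set G} (g : G) (h : Patch S r R A) : Patch S r R (g • A) := by
  induction h with
  | transBall a =>
    rw [← Set.image_smul, Set.image_image]
    simpa [smul_eq_mul, mul_assoc] using transBall (S := S) (r := r) (R := R) (g * a)
  | subset _ hAB ih => exact ih.subset (Set.smul_set_mono hAB)
  | aunion _ _ ihA ihB => exact almostUnion_smul S r g _ _ ▸ ihA.aunion ihB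

theorem biUnion_smul_shrinkSet_iterate {A : Set G} (hA : Patch S r R A) (d : ℕ) :
    ∀ L : List G, L.length ≤ 2 ^ d → Patch S r R (⋃ t ∈ L, t • (shrinkSet S r)^[d] A) := by
  induction d with
  | zero =>
    rintro (_ | ⟨t, _ | ⟨u, L⟩⟩) hL
    · exact hA.subset (by simp)
    · simpa using hA.smul t
    · simp at hL
  | succ d ih =>
    intro L hL
    have hsplit : (⋃ t ∈ L, t • (shrinkSet S r)^[d + 1] A) ⊆
        shrinkSet S r (⋃ t ∈ L.take (2 ^ d), t • (shrinkSet S r)^[d] A) ∪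
          shrinkSet S r (⋃ t ∈ L.drop (2 ^ d), t • (shrinkSet S r)^[d] A) := by
      simp only [Set.iUnion_subset_iff, Function.iterate_succ_apply', ← shrinkSet_smul]
      intro t ht
      rw [← List.take_append_drop (2 ^ d) L, List.mem_append] at ht
      rcases ht with ht | ht
      · exact Set.subset_union_of_subset_left (shrinkSet_mono S r (Set.subset_iUnion₂
          (s := fun t (_ : t ∈ L.take (2 ^ d)) => t • (shrinkSet S r)^[d] A) t ht)) _
      · exact Set.subset_union_of_subset_right (shrinkSet_mono S r (Set.subset_iUnion₂
          (s := fun t (_ : t ∈ L.drop (2 ^ d)) => t • (shrinkSet S r)^[d] A) t ht)) _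
    refine ((ih _ ?_).aunion (ih _ ?_)).subset
      (hsplit.trans (shrinkSet_union_subset_almostUnion S r _ _))
    · exact List.length_take_le _ _
    · rw [List.length_drop]
      rw [pow_succ] at hL
      omega

theorem of_ncard_le {A F : Set G} (hA : Patch S r R A) {d : ℕ}
    (hd : (1 : G) ∈ (shrinkSet S r)^[d] A) (hF : F.Finite) (hcard : F.ncard ≤ 2 ^ d) :
    Patch S r R F := by
  refine (hA.biUnion_smul_shrinkSet_iterate d hF.toFinset.toList ?_).subset fun g hg => ?_
  · rwa [Finset.length_toList, ← Set.ncard_eq_toFinset_card _ hF]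
  · exact Set.mem_iUnion₂_of_mem (i := g) (by simpa using hg) ⟨1, hd, mul_one g⟩

theorem wball_of_doubling (hR : 1 ≤ R)
    (hdouble : ∀ m, R ≤ m → Patch S r R (wball S m) → Patch S r R (wball S (2 * m))) (n : ℕ) :
    Patch S r R (wball S n) := by
  have hbase : Patch S r R (wball S R) := by simpa using transBall (S := S) (r := r) (R := R) 1
  have hpow : ∀ k, Patch S r R (wball S (2 ^ k * R)) := by
    intro k
    induction k with
    | zero => simpa using hbase
    | succ k ih =>
      rw [pow_succ, mul_comm _ 2, mul_assoc]
      exact hdouble _ (Nat.le_mul_of_pos_left R (by positivity)) ih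
  refine (hpow n).subset (wball_mono ?_)
  calc n ≤ 2 ^ n := n.lt_two_pow_self.le
    _ ≤ 2 ^ n * R := Nat.le_mul_of_pos_right _ hR

end Patch

theorem eventually_le_two_pow_div {f : ℕ → ℝ}
    (hf : ∀ α : ℝ, 1 < α → ∀ᶠ n : ℕ in Filter.atTop, f n < α ^ n) {k : ℕ} (hk : 0 < k) :
    ∀ᶠ m : ℕ in Filter.atTop, f (2 * m) ≤ 2 ^ (m / k) := by
  -- `(2 ^ e) ^ (2 * m) = 2 ^ (m / (2 * k))`, and `m / (2 * k) ≤ ⌊m / k⌋` once `m ≥ k`.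
  set e : ℝ := (4 * k : ℝ)⁻¹
  have he : 0 < e := by positivity
  obtain ⟨N, hN⟩ := Filter.eventually_atTop.1 (hf (2 ^ e) (Real.one_lt_rpow one_lt_two he))
  refine Filter.eventually_atTop.2 ⟨max N k, fun m hm => ?_⟩
  have hq : 0 < m / k := Nat.div_pos (le_of_max_le_right hm) hk
  have hmk : m < k * (m / k + 1) := Nat.lt_mul_div_succ m hk
  have hexp : e * ↑(2 * m) ≤ ↑(m / k) := by
    have : (m : ℝ) ≤ 2 * k * ↑(m / k) := by
      exact_mod_cast (show m ≤ 2 * k * (m / k) by nlinarith)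
    rw [inv_mul_le_iff₀ (by positivity)]
    push_cast
    linarith
  calc f (2 * m) ≤ (2 ^ e) ^ (2 * m) := (hN _ (by omega)).le
    _ = 2 ^ (e * ↑(2 * m)) := (Real.rpow_mul_natCast zero_le_two e _).symm
    _ ≤ 2 ^ (↑(m / k) : ℝ) := Real.rpow_le_rpow_of_exponent_le one_le_two hexp
    _ = 2 ^ (m / k) := Real.rpow_natCast 2 _

/-- A finitely generated group of subexponential growth has the patching property. -/
theorem subexponential_growth_patching (S : Finset G)
    (hsym : ∀ s ∈ S, s⁻¹ ∈ S) (hgen : Subgroup.closure (S : Set G) = ⊤)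
    (hsub : ∀ α : ℝ, 1 < α → ∀ᶠ n : ℕ in Filter.atTop,
      (Set.ncard (wball (S : Set G) n) : ℝ) < α ^ n) :
    ∀ r : ℕ, ∃ R : ℕ, ∀ n : ℕ, Patch (S : Set G) r R (wball (S : Set G) n) := by
  intro r
  obtain ⟨M, hM⟩ := Filter.eventually_atTop.1 (eventually_le_two_pow_div hsub r.succ_pos)
  refine ⟨max M 1, Patch.wball_of_doubling (le_max_right M 1) fun m hm hPm => ?_⟩
  have hdr : m / (r + 1) * r ≤ m :=
    (Nat.mul_le_mul_left _ r.le_succ).trans (Nat.div_mul_le_self m (r + 1))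
  exact hPm.of_ncard_le (one_mem_shrinkSet_iterate_wball _ _ hsym hgen hdr)
    (wball_finite S.finite_toSet hsym hgen _) (by exact_mod_cast hM _ (le_of_max_le_left hm))
end
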